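/- arXiv:1508.02439 — 3 statements merged into one kernel-verified Lean document; each statement's English description precedes it below -/
import Mathlib

section
/- Let m, n ≥ 1, let A ∈ ℝ_{≥0}^{m×n} be normalized so that min_{j∈[m]} max_{i∈[n]} A_{ji} = 1, let opt be the optimal value of the covering LP given by A, let ε ∈ (0, 1/2], and set μ = ε/(4 log(nm/ε)). Suppose x ≥ 0 and c ≥ 0 satisfy f_μ(x) ≤ (1 + cε)·opt and (1 + cε) ≤ 2, where f_μ(x) = 𝟙ᵀx + μΣ_{j=1}^m exp((1 − (Ax)_j)/μ). Then the vector x/(1 − ε) is feasible for the covering LP (A(x/(1−ε)) ≥ 𝟙) and satisfies 𝟙ᵀ(x/(1 − ε)) ≤ ((1 + cε)/(1 − ε))·opt. -/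
/-!
Every row of `A` has an entry `≥ 1`, so the all-ones vector is feasible and `opt ≤ n`. Hence
each single penalty term obeys `μ·exp((1 - (Ax)_j)/μ) ≤ f_μ(x) ≤ 2·opt ≤ 2n`, while the choice
of `μ` makes `μ·exp(ε/μ) = μ·(nm/ε)⁴` exceed `2n`. So every constraint is violated by at most
`ε`, i.e. `Ax ≥ (1 - ε)𝟙`, and dividing by `1 - ε` restores feasibility at the stated cost.
-/

open Finset Real

section CoveringLP

variable {κ ι : Type*} [Fintype ι]

def coveringLPValues (A : Matrix κ ι ℝ) : Set ℝ :=
  {c : ℝ | ∃ x : ι → ℝ, (∀ i, 0 ≤ x i) ∧ (∀ j, 1 ≤ ∑ i, A j i * x i) ∧ c = ∑ i, x i}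

theorem one_le_sum_row_of_one_le_inf'_sup' [Fintype κ] {A : Matrix κ ι ℝ}
    (hA : ∀ j i, 0 ≤ A j i) (hκ : (univ : Finset κ).Nonempty) (hι : (univ : Finset ι).Nonempty)
    (hnorm : 1 ≤ univ.inf' hκ fun j => univ.sup' hι fun i => A j i) (j : κ) :
    1 ≤ ∑ i, A j i := by
  obtain ⟨i, -, hi⟩ := (le_sup'_iff hι).1 ((le_inf'_iff hκ _).1 hnorm j (mem_univ j))
  exact hi.trans (single_le_sum (fun i _ => hA j i) (mem_univ i))

theorem nonneg_of_mem_coveringLPValues {A : Matrix κ ι ℝ} {c : ℝ}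
    (hc : c ∈ coveringLPValues A) : 0 ≤ c := by
  obtain ⟨x, hx, -, rfl⟩ := hc
  exact sum_nonneg fun i _ => hx i

theorem card_mem_coveringLPValues {A : Matrix κ ι ℝ} (hrow : ∀ j, 1 ≤ ∑ i, A j i) :
    (Fintype.card ι : ℝ) ∈ coveringLPValues A :=
  ⟨fun _ => 1, fun _ => zero_le_one, by simpa using hrow, by simp⟩

theorem one_sub_le_of_smoothed_le [Fintype κ] {A : Matrix κ ι ℝ} {x : ι → ℝ}
    (hx : ∀ i, 0 ≤ x i) {μ δ B : ℝ} (hμ : 0 < μ)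
    (hf : (∑ i, x i) + μ * ∑ j, exp ((1 - ∑ i, A j i * x i) / μ) ≤ B)
    (hB : B ≤ μ * exp (δ / μ)) (j : κ) :
    1 - δ ≤ ∑ i, A j i * x i := by
  have hterm : μ * exp ((1 - ∑ i, A j i * x i) / μ) ≤ μ * exp (δ / μ) := by
    have hsingle := single_le_sum (f := fun k => exp ((1 - ∑ i, A k i * x i) / μ))
      (fun k _ => (exp_pos _).le) (mem_univ j)
    have hx0 : 0 ≤ ∑ i, x i := sum_nonneg fun i _ => hx i
    nlinarith
  have := (div_le_div_iff_of_pos_right hμ).1 <|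
    exp_le_exp.1 ((mul_le_mul_iff_of_pos_left hμ).1 hterm)
  linarith

end CoveringLP

theorem eight_mul_log_le_pow_three {T : ℝ} (hT : 2 ≤ T) : 8 * log T ≤ T ^ 3 := by
  have := log_le_sub_one_of_pos (by linarith : 0 < T)
  nlinarith [sq_nonneg (T - 2)]

section SmoothingParameter

variable {N M ε : ℝ}

theorem two_le_mul_div (hN : 1 ≤ N) (hM : 1 ≤ M) (hε0 : 0 < ε) (hε1 : ε ≤ 1 / 2) :
    2 ≤ N * M / ε := by
  rw [le_div_iff₀ hε0]; nlinarith

theorem smoothingParam_pos (hN : 1 ≤ N) (hM : 1 ≤ M) (hε0 : 0 < ε) (hε1 : ε ≤ 1 / 2) :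
    0 < ε / (4 * log (N * M / ε)) := by
  have := log_pos (by linarith [two_le_mul_div hN hM hε0 hε1] : 1 < N * M / ε)
  positivity

/-- With `μ = ε/(4 log T)` and `T = NM/ε` one has `exp(ε/μ) = T⁴`, and `T⁴ ≥ (N/ε)·8 log T`. -/
theorem two_mul_le_smoothingParam_mul_exp (hN : 1 ≤ N) (hM : 1 ≤ M) (hε0 : 0 < ε)
    (hε1 : ε ≤ 1 / 2) :
    2 * N ≤ ε / (4 * log (N * M / ε)) * exp (ε / (ε / (4 * log (N * M / ε)))) := by
  set T := N * M / ε with hT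
  have hT2 : 2 ≤ T := two_le_mul_div hN hM hε0 hε1
  have hL : 0 < log T := log_pos (by linarith)
  have hexp : exp (ε / (ε / (4 * log T))) = T ^ 4 := by
    rw [div_div_cancel₀ hε0.ne', mul_comm, exp_mul, exp_log (by linarith)]
    norm_cast
  have hεT : ε * T = N * M := by rw [hT]; field_simp
  have hlog := eight_mul_log_le_pow_three hT2
  rw [hexp, div_mul_eq_mul_div, le_div_iff₀ (by positivity)]
  have hNT : N * T ^ 3 ≤ ε * T ^ 4 := by
    have : N ≤ ε * T := by rw [hεT]; nlinarith
    nlinarith [pow_pos (by linarith : (0 : ℝ) < T) 3]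
  nlinarith

end SmoothingParameter

theorem smoothing_approx_solution_general
    (m n : ℕ) (hm : 0 < m) (hn : 0 < n)
    (A : Matrix (Fin m) (Fin n) ℝ) (hA : ∀ j i, 0 ≤ A j i)
    (hnorm : (Finset.univ.inf' ⟨⟨0, hm⟩, Finset.mem_univ _⟩
        fun j => Finset.univ.sup' ⟨⟨0, hn⟩, Finset.mem_univ _⟩ fun i => A j i) = 1)
    (opt : ℝ)
    (hopt : IsLeast {c : ℝ | ∃ x : Fin n → ℝ, (∀ i, 0 ≤ x i) ∧
      (∀ j, 1 ≤ ∑ i, A j i * x i) ∧ c = ∑ i, x i} opt)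
    (ε : ℝ) (hε0 : 0 < ε) (hε1 : ε ≤ 1/2)
    (μ : ℝ) (hμ : μ = ε / (4 * Real.log ((n : ℝ) * m / ε)))
    (x : Fin n → ℝ) (hx0 : ∀ i, 0 ≤ x i)
    (c : ℝ)
    (hfx : (∑ i, x i) + μ * ∑ j, Real.exp ((1 - ∑ i, A j i * x i) / μ) ≤ (1 + c * ε) * opt)
    (hc2 : 1 + c * ε ≤ 2) :
    (∀ j, 1 ≤ ∑ i, A j i * (x i / (1 - ε))) ∧
    (∑ i, x i / (1 - ε)) ≤ ((1 + c * ε) / (1 - ε)) * opt := by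
  have hn1 : (1 : ℝ) ≤ n := by exact_mod_cast hn
  have hm1 : (1 : ℝ) ≤ m := by exact_mod_cast hm
  have h1ε : 0 < 1 - ε := by linarith
  have hrow := one_le_sum_row_of_one_le_inf'_sup' hA _ _ hnorm.ge
  have hopt0 : 0 ≤ opt := nonneg_of_mem_coveringLPValues hopt.1
  have hoptn : opt ≤ n := by simpa using hopt.2 (card_mem_coveringLPValues hrow)
  have hB : (1 + c * ε) * opt ≤ μ * exp (ε / μ) :=
    calc (1 + c * ε) * opt ≤ 2 * n := by nlinarith
      _ ≤ μ * exp (ε / μ) := by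
        rw [hμ]; exact two_mul_le_smoothingParam_mul_exp hn1 hm1 hε0 hε1
  have hμ0 : 0 < μ := hμ ▸ smoothingParam_pos hn1 hm1 hε0 hε1
  have hviol := one_sub_le_of_smoothed_le hx0 hμ0 hfx hB
  have hpenalty : 0 ≤ μ * ∑ j, exp ((1 - ∑ i, A j i * x i) / μ) :=
    mul_nonneg hμ0.le (sum_nonneg fun j _ => (exp_pos _).le)
  refine ⟨fun j => ?_, ?_⟩
  · simp_rw [← mul_div_assoc, ← sum_div]
    rw [le_div_iff₀ h1ε]
    linarith [hviol j]
  · rw [← sum_div, div_mul_eq_mul_div]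
    exact div_le_div_of_nonneg_right (by linarith) h1ε.le

/-- With `μ = ε/(4 log(nm/ε))`, if `x ≥ 0` satisfies `f_μ(x) ≤ (1 + cε)·opt ≤ 2·opt`,
then `x/(1−ε)` is feasible for the covering LP and has objective value at most
`((1 + cε)/(1 − ε))·opt`. -/
theorem smoothing_approx_solution
    (m n : ℕ) (hm : 0 < m) (hn : 0 < n)
    (A : Matrix (Fin m) (Fin n) ℝ) (hA : ∀ j i, 0 ≤ A j i)
    (hnorm : (Finset.univ.inf' ⟨⟨0, hm⟩, Finset.mem_univ _⟩
        fun j => Finset.univ.sup' ⟨⟨0, hn⟩, Finset.mem_univ _⟩ fun i => A j i) = 1)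
    (opt : ℝ)
    (hopt : IsLeast {c : ℝ | ∃ x : Fin n → ℝ, (∀ i, 0 ≤ x i) ∧
      (∀ j, 1 ≤ ∑ i, A j i * x i) ∧ c = ∑ i, x i} opt)
    (ε : ℝ) (hε0 : 0 < ε) (hε1 : ε ≤ 1/2)
    (μ : ℝ) (hμ : μ = ε / (4 * Real.log ((n : ℝ) * m / ε)))
    (x : Fin n → ℝ) (hx0 : ∀ i, 0 ≤ x i)
    (c : ℝ) (hc : 0 ≤ c)
    (hfx : (∑ i, x i) + μ * ∑ j, Real.exp ((1 - ∑ i, A j i * x i) / μ) ≤ (1 + c * ε) * opt)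
    (hc2 : 1 + c * ε ≤ 2) :
    (∀ j, 1 ≤ ∑ i, A j i * (x i / (1 - ε))) ∧
    (∑ i, x i / (1 - ε)) ≤ ((1 + c * ε) / (1 - ε)) * opt :=
  smoothing_approx_solution_general m n hm hn A hA hnorm opt hopt ε hε0 hε1 μ hμ x hx0 c hfx hc2
end

section
/- Let μ > 0, L = 4/μ, A ∈ ℝ_{≥0}^{m×n} with every column nonzero, and f_μ(x) = 𝟙ᵀx + μΣ_{j=1}^m exp((1 − (Ax)_j)/μ). Fix x ∈ Δ, i ∈ [n], and write g = ∇_i f_μ(x). Suppose γ ∈ ℝ satisfies γ·g ≤ 0 and |γ| ≤ min(1, |g|)/(L·‖A_{:i}‖_∞). Then f_μ(x) − f_μ(x + γe_i) ≥ −½·g·γ, i.e., the gradient descent step y = x + γe_i satisfies f_μ(x) − f_μ(y) ≥ ½⟨∇f_μ(x), x − y⟩. -/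
/-!
Moving along `e_i` multiplies each penalty `p_j` by `exp (-A_{ji} γ / μ)`, and the step-length
bound keeps this exponent in `[-1/4, 1/4]`, where `exp s ≤ 1 + s + s²`. This gives
`f_μ(x + γ e_i) ≤ f_μ(x) + γ g + (γ² / μ) ∑_j A_{ji}² p_j`, and `0 ≤ A_{ji} ≤ ‖A_{:i}‖_∞` bounds the
quadratic term by `(γ² / μ) ‖A_{:i}‖_∞ (1 - g)`. Since `min (1, |g|) (1 - g) ≤ 2 |g|`, the step-length
bound makes this at most half of the first-order gain `-γ g`.
-/

open Real Matrix

theorem Function.update_add_eq_add_single {κ M : Type*} [DecidableEq κ] [AddCommMonoid M]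
    (x : κ → M) (i : κ) (γ : M) : Function.update x i (x i + γ) = x + Pi.single i γ := by
  ext k
  by_cases h : k = i
  · subst h; simp
  · simp [h]

theorem Fintype.sum_update_add {κ M : Type*} [Fintype κ] [DecidableEq κ] [AddCommMonoid M]
    (x : κ → M) (i : κ) (γ : M) : ∑ k, Function.update x i (x i + γ) k = ∑ k, x k + γ := by
  simp [Function.update_add_eq_add_single, Finset.sum_add_distrib]

theorem Real.exp_le_one_add_add_sq {s : ℝ} (hs : |s| ≤ 1) : exp s ≤ 1 + s + s ^ 2 := by
  linarith [(abs_le.mp (abs_exp_sub_one_sub_id_le hs)).2]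

theorem Real.mul_exp_neg_mul_div_le {μ p a γ : ℝ} (hμ : 0 < μ) (hp : 0 ≤ p) (h : |a * γ| ≤ μ) :
    μ * (p * exp (-(a * γ) / μ)) ≤ μ * p - γ * (a * p) + γ ^ 2 / μ * (a ^ 2 * p) := by
  have hs : |-(a * γ) / μ| ≤ 1 := by
    rwa [abs_div, abs_neg, abs_of_pos hμ, div_le_one hμ]
  calc μ * (p * exp (-(a * γ) / μ))
      ≤ μ * (p * (1 + -(a * γ) / μ + (-(a * γ) / μ) ^ 2)) := by
        gcongr
        exact exp_le_one_add_add_sq hs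
    _ = μ * p - γ * (a * p) + γ ^ 2 / μ * (a ^ 2 * p) := by
        field_simp
        ring

namespace SmoothedCovering

variable {ι κ : Type*} [Fintype κ]

noncomputable def penalty (A : Matrix ι κ ℝ) (μ : ℝ) (x : κ → ℝ) (j : ι) : ℝ :=
  exp ((1 - (A *ᵥ x) j) / μ)

theorem penalty_update [DecidableEq κ] (A : Matrix ι κ ℝ) (μ : ℝ) (x : κ → ℝ) (i : κ) (γ : ℝ)
    (j : ι) :
    penalty A μ (Function.update x i (x i + γ)) j = penalty A μ x j * exp (-(A j i * γ) / μ) := by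
  rw [penalty, penalty, ← exp_add, Function.update_add_eq_add_single, mulVec_add, mulVec_single]
  congr 1
  simp only [op_smul_eq_smul, Pi.add_apply, Pi.smul_apply, col_apply, smul_eq_mul]
  ring

variable [Fintype ι]

noncomputable def objective (A : Matrix ι κ ℝ) (μ : ℝ) (x : κ → ℝ) : ℝ :=
  ∑ k, x k + μ * ∑ j, penalty A μ x j

noncomputable def partialDeriv (A : Matrix ι κ ℝ) (μ : ℝ) (x : κ → ℝ) (i : κ) : ℝ :=
  1 - ∑ j, A j i * penalty A μ x j

variable {A : Matrix ι κ ℝ} {μ B γ : ℝ} {x : κ → ℝ} {i : κ}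

theorem partialDeriv_le_one (hA : ∀ j, 0 ≤ A j i) : partialDeriv A μ x i ≤ 1 := by
  have : 0 ≤ ∑ j, A j i * penalty A μ x j :=
    Finset.sum_nonneg fun j _ => mul_nonneg (hA j) (exp_pos _).le
  rw [partialDeriv]
  linarith

theorem sum_sq_mul_penalty_le (hA : ∀ j, 0 ≤ A j i) (hAB : ∀ j, A j i ≤ B) :
    ∑ j, A j i ^ 2 * penalty A μ x j ≤ B * (1 - partialDeriv A μ x i) := by
  rw [partialDeriv, sub_sub_cancel, Finset.mul_sum]
  refine Finset.sum_le_sum fun j _ => ?_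
  rw [sq, mul_assoc]
  exact mul_le_mul_of_nonneg_right (hAB j) (mul_nonneg (hA j) (exp_pos _).le)

theorem objective_update_le [DecidableEq κ] (hμ : 0 < μ) (hA : ∀ j, 0 ≤ A j i)
    (hAB : ∀ j, A j i ≤ B) (hγ : |γ| * B ≤ μ) :
    objective A μ (Function.update x i (x i + γ)) ≤
      objective A μ x + γ * partialDeriv A μ x i +
        γ ^ 2 / μ * (B * (1 - partialDeriv A μ x i)) := by
  have hstep : ∀ j, μ * penalty A μ (Function.update x i (x i + γ)) j ≤
      μ * penalty A μ x j - γ * (A j i * penalty A μ x j) +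
        γ ^ 2 / μ * (A j i ^ 2 * penalty A μ x j) := by
    intro j
    rw [penalty_update]
    refine mul_exp_neg_mul_div_le hμ (exp_pos _).le ?_
    rw [abs_mul, abs_of_nonneg (hA j), mul_comm]
    exact (mul_le_mul_of_nonneg_left (hAB j) (abs_nonneg γ)).trans hγ
  have hsum := Finset.sum_le_sum fun j (_ : j ∈ Finset.univ) => hstep j
  simp only [Finset.sum_add_distrib, Finset.sum_sub_distrib, ← Finset.mul_sum] at hsum
  have hT := mul_le_mul_of_nonneg_left (sum_sq_mul_penalty_le (μ := μ) (x := x) hA hAB)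
    (div_nonneg (sq_nonneg γ) hμ.le)
  rw [objective, objective, Fintype.sum_update_add]
  rw [partialDeriv] at hT ⊢
  linarith

end SmoothedCovering

theorem coordinate_step_le_half {μ B g γ : ℝ} (hμ : 0 < μ) (hg : g ≤ 1) (hsign : γ * g ≤ 0)
    (hγ : |γ| * (4 / μ * B) ≤ min 1 |g|) :
    γ * g + γ ^ 2 / μ * (B * (1 - g)) ≤ γ * g / 2 := by
  have hmin : min 1 |g| * (1 - g) ≤ 2 * |g| := by
    rcases le_total 0 g with h | h
    · nlinarith [min_le_right 1 |g|, abs_of_nonneg h]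
    · nlinarith [min_le_left 1 |g|, min_le_right 1 |g|, abs_of_nonpos h]
  have habs : |γ| * |g| = -(γ * g) := by rw [← abs_mul, abs_of_nonpos hsign]
  have hsplit : γ ^ 2 / μ * (B * (1 - g)) = |γ| / 4 * (|γ| * (4 / μ * B) * (1 - g)) := by
    rw [← sq_abs]; field_simp
  have hstep : |γ| * (4 / μ * B) * (1 - g) ≤ min 1 |g| * (1 - g) := by gcongr
  nlinarith [abs_nonneg γ]

open SmoothedCovering in
theorem gradient_descent_improvement_general
    (m n : ℕ) (μ L : ℝ) (hμ : 0 < μ) (hL : L = 4 / μ)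
    (A : Matrix (Fin m) (Fin n) ℝ) (hA : ∀ j i, 0 ≤ A j i)
    (Anorm : Fin n → ℝ)
    (hAnorm : ∀ i, IsGreatest {a : ℝ | ∃ j, A j i = a} (Anorm i))
    (x : Fin n → ℝ)
    (i : Fin n) (g : ℝ)
    (hg : g = 1 - ∑ j, A j i * Real.exp ((1 - ∑ k, A j k * x k) / μ))
    (γ : ℝ) (hsign : γ * g ≤ 0)
    (hlen : |γ| ≤ min 1 |g| / (L * Anorm i)) :
    ((∑ k, x k) + μ * ∑ j, Real.exp ((1 - ∑ k, A j k * x k) / μ)) -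
      ((∑ k, Function.update x i (x i + γ) k) +
        μ * ∑ j, Real.exp ((1 - ∑ k, A j k * Function.update x i (x i + γ) k) / μ))
      ≥ -(1/2) * g * γ := by
  obtain ⟨j₀, hj₀⟩ := (hAnorm i).1
  have hB : 0 ≤ Anorm i := hj₀ ▸ hA j₀ i
  have hAB : ∀ j, A j i ≤ Anorm i := fun j => (hAnorm i).2 ⟨j, rfl⟩
  change g = partialDeriv A μ x i at hg
  subst hg hL
  have hγ : |γ| * (4 / μ * Anorm i) ≤ min 1 |partialDeriv A μ x i| :=
    mul_le_of_le_div₀ (by positivity) (by positivity) hlen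
  have hγB : |γ| * Anorm i ≤ μ := by
    have := hγ.trans (min_le_left _ _)
    rw [mul_left_comm, div_mul_eq_mul_div, div_le_one hμ] at this
    linarith [mul_nonneg (abs_nonneg γ) hB]
  have hdescent := objective_update_le hμ (hA · i) hAB hγB (x := x)
  have hquad := coordinate_step_le_half hμ (partialDeriv_le_one (hA · i)) hsign hγ
  change objective A μ x - objective A μ (Function.update x i (x i + γ)) ≥ _
  linarith

/-- Gradient descent improvement: if `g = ∇_i f_μ(x)`, `γ·g ≤ 0` and
`|γ| ≤ min(1,|g|)/(L‖A_{:i}‖_∞)`, then the step `y = x + γe_i` satisfies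
`f_μ(x) − f_μ(y) ≥ ½⟨∇f_μ(x), x − y⟩ = −½·g·γ`. -/
theorem gradient_descent_improvement
    (m n : ℕ) (μ L : ℝ) (hμ : 0 < μ) (hL : L = 4 / μ)
    (A : Matrix (Fin m) (Fin n) ℝ) (hA : ∀ j i, 0 ≤ A j i)
    (hcol : ∀ i, ∃ j, 0 < A j i)
    (Anorm : Fin n → ℝ)
    (hAnorm : ∀ i, IsGreatest {a : ℝ | ∃ j, A j i = a} (Anorm i))
    (x : Fin n → ℝ) (hx : ∀ k, 0 ≤ x k ∧ x k ≤ 3 / Anorm k)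
    (i : Fin n) (g : ℝ)
    (hg : g = 1 - ∑ j, A j i * Real.exp ((1 - ∑ k, A j k * x k) / μ))
    (γ : ℝ) (hsign : γ * g ≤ 0)
    (hlen : |γ| ≤ min 1 |g| / (L * Anorm i)) :
    ((∑ k, x k) + μ * ∑ j, Real.exp ((1 - ∑ k, A j k * x k) / μ)) -
      ((∑ k, Function.update x i (x i + γ) k) +
        μ * ∑ j, Real.exp ((1 - ∑ k, A j k * Function.update x i (x i + γ) k) / μ))
      ≥ -(1/2) * g * γ :=
  gradient_descent_improvement_general m n μ L hμ hL A hA Anorm hAnorm x i g hg γ hsign hlen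
end

section
/- Let m, n ≥ 1, let A ∈ ℝ_{≥0}^{m×n} have every column nonzero and be normalized so that min_{j∈[m]} max_{i∈[n]} A_{ji} = 1, let opt be the optimal value of the covering LP given by A, let ε ∈ (0, 1/2], and set μ = ε/(4 log(nm/ε)). Let x* be an optimal solution of the covering LP satisfying 0 ≤ x*_i ≤ 2/‖A_{:i}‖_∞ for all i, and set u* = (1 + ε/2)x*. Suppose x^# satisfies Ax^# ≥ 𝟙, 𝟙ᵀx^# ≤ 2·opt, and 0 ≤ x^#_i ≤ 2/‖A_{:i}‖_∞ for all i, and set x^start = (1 + ε/2)x^#. Then: (i) x^start ∈ Δ; (ii) f_μ(x^start) ≤ 4·opt; and (iii) V_{x^start}(u*) ≤ 6·opt, where V_x(y) = ½Σ_i ‖A_{:i}‖_∞(x_i − y_i)² and f_μ(x) = 𝟙ᵀx + μΣ_{j=1}^m exp((1 − (Ax)_j)/μ). -/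
/-!
Scaling the `2`-approximation by `1 + ε/2 ≤ 5/4` keeps every coordinate below `3/‖A_{:i}‖_∞`
and keeps the objective below `5/2 · opt`, while every covering constraint now holds with
slack `ε/2`. With `μ = ε/(4 log(nm/ε))` that slack makes each exponential penalty at most
`(ε/(nm))²`, so the whole smoothing term is at most `1/16`; the row of `A` with maximum entry `1`
gives `opt ≥ 1/2`, which absorbs it. For the divergence, the box constraints give
`a (x - y)² ≤ a x² + a y² ≤ 2x + 2y` coordinatewise, hence `V ≤ (1 + ε/2)² (2 opt + opt)`.
-/

open Finset Real

lemma exists_forall_le_of_inf'_sup'_eq {ι κ α : Type*} [LinearOrder α] {s : Finset ι}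
    {t : Finset κ} (hs : s.Nonempty) (ht : t.Nonempty) {f : ι → κ → α} {c : α}
    (h : s.inf' hs (fun j => t.sup' ht (f j)) = c) : ∃ j ∈ s, ∀ i ∈ t, f j i ≤ c := by
  obtain ⟨j, hj, hjc⟩ := exists_mem_eq_inf' hs fun j => t.sup' ht (f j)
  exact ⟨j, hj, (sup'_le_iff ht _).1 (hjc ▸ h).le⟩

lemma smul_le_div_of_le_div {a c x : ℝ} (hc : c ≤ 3 / 2) (hx0 : 0 ≤ x)
    (hx : x ≤ 2 / a) : c * x ≤ 3 / a := by
  calc c * x ≤ 3 / 2 * (2 / a) := mul_le_mul hc hx hx0 (by norm_num)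
    _ = 3 / a := by ring

lemma mul_sq_sub_le {a x y : ℝ} (ha : 0 ≤ a) (hx0 : 0 ≤ x) (hy0 : 0 ≤ y) (hx : x ≤ 2 / a)
    (hy : y ≤ 2 / a) : a * (x - y) ^ 2 ≤ 2 * (x + y) := by
  have hax : x * a ≤ 2 := mul_le_of_le_div₀ zero_le_two ha hx
  have hay : y * a ≤ 2 := mul_le_of_le_div₀ zero_le_two ha hy
  nlinarith [mul_nonneg (mul_nonneg ha hx0) hy0]

lemma half_sum_mul_sq_smul_sub_smul_le {ι : Type*} [Fintype ι] {a x y : ι → ℝ} {c : ℝ}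
    (hc : c ^ 2 ≤ 2) (ha : ∀ i, 0 ≤ a i) (hx0 : ∀ i, 0 ≤ x i) (hy0 : ∀ i, 0 ≤ y i)
    (hx : ∀ i, x i ≤ 2 / a i) (hy : ∀ i, y i ≤ 2 / a i) :
    1 / 2 * ∑ i, a i * ((c • x) i - (c • y) i) ^ 2 ≤ 2 * (∑ i, x i + ∑ i, y i) := by
  have hscale : ∑ i, a i * ((c • x) i - (c • y) i) ^ 2 = c ^ 2 * ∑ i, a i * (x i - y i) ^ 2 := by
    simp only [Pi.smul_apply, smul_eq_mul, mul_sum]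
    exact sum_congr rfl fun i _ => by ring
  have hsum : ∑ i, a i * (x i - y i) ^ 2 ≤ 2 * (∑ i, x i + ∑ i, y i) := by
    rw [← sum_add_distrib, mul_sum]
    exact sum_le_sum fun i _ => mul_sq_sub_le (ha i) (hx0 i) (hy0 i) (hx i) (hy i)
  have hnonneg : 0 ≤ ∑ i, a i * (x i - y i) ^ 2 :=
    sum_nonneg fun i _ => mul_nonneg (ha i) (sq_nonneg _)
  rw [hscale]
  nlinarith

section Smoothing

variable {ε μ N : ℝ}

lemma half_lt_log_div (hε0 : 0 < ε) (hε1 : ε ≤ 1 / 2) (hN : 1 ≤ N) : 1 / 2 < log (N / ε) := by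
  have h2 : 2 ≤ N / ε := by rw [le_div_iff₀ hε0]; linarith
  linarith [log_le_log two_pos h2, log_two_gt_d9]

lemma smoothing_param_pos_and_le (hε0 : 0 < ε) (hε1 : ε ≤ 1 / 2) (hN : 1 ≤ N)
    (hμ : μ = ε / (4 * log (N / ε))) : 0 < μ ∧ μ ≤ ε / 2 := by
  have hL := half_lt_log_div hε0 hε1 hN
  subst hμ
  exact ⟨by positivity, div_le_div_of_nonneg_left hε0.le two_pos (by linarith)⟩

/-- Slack `ε/2` in a constraint is worth the factor `exp (-(ε/2)/μ) = exp (-2 log (N/ε))`. -/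
lemma exp_div_le_sq_of_add_half_le (hε0 : 0 < ε) (hε1 : ε ≤ 1 / 2) (hN : 1 ≤ N)
    (hμ : μ = ε / (4 * log (N / ε))) {s : ℝ} (hs : 1 + ε / 2 ≤ s) :
    exp ((1 - s) / μ) ≤ (ε / N) ^ 2 := by
  have hL := half_lt_log_div hε0 hε1 hN
  have hμ0 := (smoothing_param_pos_and_le hε0 hε1 hN hμ).1
  have hlog : log ((ε / N) ^ 2) = -(2 * log (N / ε)) := by
    rw [← inv_div, inv_pow, log_inv, log_pow, Nat.cast_ofNat]
  have hslack : (1 - s) / μ ≤ log ((ε / N) ^ 2) := by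
    rw [hlog, div_le_iff₀ hμ0, hμ]
    field_simp
    linarith
  calc exp ((1 - s) / μ) ≤ exp (log ((ε / N) ^ 2)) := exp_le_exp.2 hslack
    _ = (ε / N) ^ 2 := exp_log (by positivity)

end Smoothing

lemma mul_sum_exp_le_of_add_half_le {n m : ℕ} (hn : 0 < n) (hm : 0 < m) {ε μ : ℝ} (hε0 : 0 < ε)
    (hε1 : ε ≤ 1 / 2) (hμ : μ = ε / (4 * log ((n : ℝ) * m / ε))) {s : Fin m → ℝ}
    (hs : ∀ j, 1 + ε / 2 ≤ s j) : μ * ∑ j, exp ((1 - s j) / μ) ≤ 1 / 16 := by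
  have hn1 : (1 : ℝ) ≤ n := by exact_mod_cast hn
  have hm1 : (1 : ℝ) ≤ m := by exact_mod_cast hm
  have hN : (1 : ℝ) ≤ n * m := one_le_mul_of_one_le_of_one_le hn1 hm1
  obtain ⟨hμ0, hμε⟩ := smoothing_param_pos_and_le hε0 hε1 hN hμ
  have hsum : ∑ j, exp ((1 - s j) / μ) ≤ ε ^ 2 :=
    calc ∑ j, exp ((1 - s j) / μ) ≤ ∑ _j : Fin m, (ε / (n * m)) ^ 2 :=
          sum_le_sum fun j _ => exp_div_le_sq_of_add_half_le hε0 hε1 hN hμ (hs j)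
      _ = ε ^ 2 / (n ^ 2 * m) := by simp [div_pow]; field_simp
      _ ≤ ε ^ 2 := div_le_self (sq_nonneg ε) (one_le_mul_of_one_le_of_one_le (one_le_pow₀ hn1) hm1)
  calc μ * ∑ j, exp ((1 - s j) / μ) ≤ ε / 2 * ε ^ 2 :=
        mul_le_mul hμε hsum (sum_nonneg fun _ _ => (exp_pos _).le) (by positivity)
    _ ≤ 1 / 16 := by nlinarith [pow_le_pow_left₀ hε0.le hε1 3]

theorem good_starting_point_general
    (m n : ℕ) (hm : 0 < m) (hn : 0 < n)
    (A : Matrix (Fin m) (Fin n) ℝ) (hA : ∀ j i, 0 ≤ A j i)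
    (Anorm : Fin n → ℝ)
    (hAnorm : ∀ i, IsGreatest {a : ℝ | ∃ j, A j i = a} (Anorm i))
    (hnorm : (Finset.univ.inf' ⟨⟨0, hm⟩, Finset.mem_univ _⟩
        fun j => Finset.univ.sup' ⟨⟨0, hn⟩, Finset.mem_univ _⟩ fun i => A j i) = 1)
    (opt : ℝ)
    (ε : ℝ) (hε0 : 0 < ε) (hε1 : ε ≤ 1/2)
    (μ : ℝ) (hμ : μ = ε / (4 * Real.log ((n : ℝ) * m / ε)))
    (xstar : Fin n → ℝ) (hxs0 : ∀ i, 0 ≤ xstar i)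
    (hxsopt : ∑ i, xstar i = opt)
    (hxsb : ∀ i, xstar i ≤ 2 / Anorm i)
    (xsharp : Fin n → ℝ) (hsh0 : ∀ i, 0 ≤ xsharp i)
    (hshf : ∀ j, 1 ≤ ∑ i, A j i * xsharp i)
    (hsh2 : ∑ i, xsharp i ≤ 2 * opt)
    (hshb : ∀ i, xsharp i ≤ 2 / Anorm i)
    (xstart ustar : Fin n → ℝ)
    (hstart : xstart = (1 + ε/2) • xsharp)
    (hustar : ustar = (1 + ε/2) • xstar) :
    (∀ i, 0 ≤ xstart i ∧ xstart i ≤ 3 / Anorm i) ∧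
    (∑ i, xstart i) + μ * ∑ j, Real.exp ((1 - ∑ i, A j i * xstart i) / μ) ≤ 4 * opt ∧
    (1/2) * ∑ i, Anorm i * (xstart i - ustar i)^2 ≤ 6 * opt := by
  subst hstart hustar
  have hc0 : 0 ≤ 1 + ε / 2 := by linarith
  have hAnorm0 (i : Fin n) : 0 ≤ Anorm i := by
    obtain ⟨j, hj⟩ := (hAnorm i).1
    exact hj ▸ hA j i
  obtain ⟨j₀, -, hj₀⟩ := exists_forall_le_of_inf'_sup'_eq _ _ hnorm
  have hopt_ge : 1 / 2 ≤ opt := by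
    have : ∑ i, A j₀ i * xsharp i ≤ ∑ i, xsharp i :=
      sum_le_sum fun i _ => mul_le_of_le_one_left (hsh0 i) (hj₀ i (mem_univ i))
    linarith [hshf j₀]
  have hslack (j : Fin m) : 1 + ε / 2 ≤ ∑ i, A j i * ((1 + ε / 2) • xsharp) i := by
    simpa [mul_sum, mul_left_comm] using mul_le_mul_of_nonneg_left (hshf j) hc0
  have hpenalty := mul_sum_exp_le_of_add_half_le hn hm hε0 hε1 hμ hslack
  refine ⟨fun i => ⟨mul_nonneg hc0 (hsh0 i),
    smul_le_div_of_le_div (by linarith) (hsh0 i) (hshb i)⟩, ?_, ?_⟩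
  · simp only [Pi.smul_apply, smul_eq_mul, ← mul_sum] at hpenalty ⊢
    nlinarith
  · have := half_sum_mul_sq_smul_sub_smul_le (c := 1 + ε / 2) (by nlinarith) hAnorm0 hsh0 hxs0 hshb hxsb
    linarith

/-- Good starting point: scaling a `2`-approximation `x^#` (with coordinate bounds
`x^#_i ≤ 2/‖A_{:i}‖_∞`) by `1 + ε/2` yields `x^start ∈ Δ` with `f_μ(x^start) ≤ 4·opt` and
`V_{x^start}(u*) ≤ 6·opt`, where `u* = (1 + ε/2)x*`. -/
theorem good_starting_point
    (m n : ℕ) (hm : 0 < m) (hn : 0 < n)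
    (A : Matrix (Fin m) (Fin n) ℝ) (hA : ∀ j i, 0 ≤ A j i)
    (hcol : ∀ i, ∃ j, 0 < A j i)
    (Anorm : Fin n → ℝ)
    (hAnorm : ∀ i, IsGreatest {a : ℝ | ∃ j, A j i = a} (Anorm i))
    (hnorm : (Finset.univ.inf' ⟨⟨0, hm⟩, Finset.mem_univ _⟩
        fun j => Finset.univ.sup' ⟨⟨0, hn⟩, Finset.mem_univ _⟩ fun i => A j i) = 1)
    (opt : ℝ)
    (hopt : IsLeast {c : ℝ | ∃ x : Fin n → ℝ, (∀ i, 0 ≤ x i) ∧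
      (∀ j, 1 ≤ ∑ i, A j i * x i) ∧ c = ∑ i, x i} opt)
    (ε : ℝ) (hε0 : 0 < ε) (hε1 : ε ≤ 1/2)
    (μ : ℝ) (hμ : μ = ε / (4 * Real.log ((n : ℝ) * m / ε)))
    (xstar : Fin n → ℝ) (hxs0 : ∀ i, 0 ≤ xstar i)
    (hxsf : ∀ j, 1 ≤ ∑ i, A j i * xstar i)
    (hxsopt : ∑ i, xstar i = opt)
    (hxsb : ∀ i, xstar i ≤ 2 / Anorm i)
    (xsharp : Fin n → ℝ) (hsh0 : ∀ i, 0 ≤ xsharp i)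
    (hshf : ∀ j, 1 ≤ ∑ i, A j i * xsharp i)
    (hsh2 : ∑ i, xsharp i ≤ 2 * opt)
    (hshb : ∀ i, xsharp i ≤ 2 / Anorm i)
    (xstart ustar : Fin n → ℝ)
    (hstart : xstart = (1 + ε/2) • xsharp)
    (hustar : ustar = (1 + ε/2) • xstar) :
    (∀ i, 0 ≤ xstart i ∧ xstart i ≤ 3 / Anorm i) ∧
    (∑ i, xstart i) + μ * ∑ j, Real.exp ((1 - ∑ i, A j i * xstart i) / μ) ≤ 4 * opt ∧
    (1/2) * ∑ i, Anorm i * (xstart i - ustar i)^2 ≤ 6 * opt :=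
  good_starting_point_general m n hm hn A hA Anorm hAnorm hnorm opt ε hε0 hε1 μ hμ xstar hxs0 hxsopt
    hxsb xsharp hsh0 hshf hsh2 hshb xstart ustar hstart hustar
end
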